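/- Let μ be a nonzero finite Borel measure on ℝ^d with compact support. Then R(μ)/μ(ℝ^d) ≤ λ₁(μ) ≤ diam(supp μ)/μ(ℝ^d), where R(μ) := esssup_{x∼μ} |x − C_μ(ℝ^d)| and diam denotes the Euclidean diameter. -/

import Mathlib

open MeasureTheory Filter Topology ProbabilityTheory
open scoped ENNReal NNReal symmDiff Classical RealInnerProductSpace

noncomputable section

/-- `d`-dimensional Euclidean space. -/
abbrev Euc (d : ℕ) : Type := EuclideanSpace ℝ (Fin d)

/-- The sum-of-norms clustering functional
`J_{μ,λ}(u) = ∫ |u x - x|² dμ + λ ∬ |u x - u y| dμ dμ`. -/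
def SONJ {d : ℕ} (μ : Measure (Euc d)) (lam : ℝ) (u : Euc d → Euc d) : ℝ :=
  ∫ x, ‖u x - x‖ ^ 2 ∂μ + lam * ∫ x, ∫ y, ‖u x - u y‖ ∂μ ∂μ

/-- `u` is a minimizer of `J_{μ,λ}` over `L²(μ; ℝ^d)`.  Since `J_{μ,λ}` has a unique
minimizer (up to `μ`-a.e. equality), this predicate characterizes `u_{μ,λ}`. -/
def IsSONMin {d : ℕ} (μ : Measure (Euc d)) (lam : ℝ) (u : Euc d → Euc d) : Prop :=
  MemLp u 2 μ ∧ ∀ v : Euc d → Euc d, MemLp v 2 μ → SONJ μ lam u ≤ SONJ μ lam v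

/-- `μ` is `λ`-cohesive: the minimizer of `J_{μ,λ}` is `μ`-a.e. constant. -/
def Cohesive {d : ℕ} (μ : Measure (Euc d)) (lam : ℝ) : Prop :=
  ∃ u : Euc d → Euc d, IsSONMin μ lam u ∧ ∃ c : Euc d, u =ᵐ[μ] fun _ => c

/-- `μ` is `λ`-shattered: the minimizer of `J_{μ,λ}` agrees `μ`-a.e. with a measurable
injection. -/
def Shattered {d : ℕ} (μ : Measure (Euc d)) (lam : ℝ) : Prop :=
  ∃ u : Euc d → Euc d, IsSONMin μ lam u ∧
    ∃ v : Euc d → Euc d, Measurable v ∧ Function.Injective v ∧ u =ᵐ[μ] v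

/-- `λ₁(μ) = inf {λ ≥ 0 | μ is λ-cohesive}`. -/
def lambda1 {d : ℕ} (μ : Measure (Euc d)) : ℝ :=
  sInf {lam : ℝ | 0 ≤ lam ∧ Cohesive μ lam}

/-- `λ⋆(μ) = sup {λ ≥ 0 | μ is λ-shattered}`. -/
def lambdaStar {d : ℕ} (μ : Measure (Euc d)) : ℝ :=
  sSup {lam : ℝ | 0 ≤ lam ∧ Shattered μ lam}

/-- The level set (cluster) of `u` containing `x`: `V_{u,x} = u⁻¹({u x})`. -/
def Vset {d : ℕ} (u : Euc d → Euc d) (x : Euc d) : Set (Euc d) := {y | u y = u x}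

/-- The `μ`-centroid of a set `V`: the `μ`-average of `V` if `μ V > 0`, and the unique
element of `V` if `V` is a singleton (otherwise junk). -/
def muCentroid {d : ℕ} (μ : Measure (Euc d)) (V : Set (Euc d)) : Euc d :=
  if 0 < μ V then (μ V).toReal⁻¹ • ∫ x in V, x ∂μ
  else if h : ∃ x, V = {x} then h.choose else 0

/-- The first canonical basis vector of `ℝ^d`. -/
def e1 (d : ℕ) : Euc d := if h : 0 < d then EuclideanSpace.single (⟨0, h⟩ : Fin d) 1 else 0

/-- The constant `γ_d` from the paper. -/
def gammaD (d : ℕ) : ℝ :=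
  ((2 * (d : ℝ) + 1) / (2 * (d : ℝ) + 4)) *
    (if Even d then
      (((d : ℝ) + 1) * ((Nat.factorial (2 * d) : ℝ)) * Real.pi) /
        (2 ^ (3 * d) * ((Nat.factorial (d / 2) : ℝ)) ^ 2 * ((Nat.factorial d : ℝ)))
    else
      (((d : ℝ) + 1) * ((Nat.factorial ((d - 1) / 2) : ℝ)) ^ 2 *
          ((Nat.factorial (2 * d) : ℝ))) /
        (2 ^ d * ((Nat.factorial d : ℝ)) ^ 3))

/-- The union of the two open unit balls centered at `± r e₁`. -/
def ballUnion (d : ℕ) (r : ℝ) : Set (Euc d) :=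
  Metric.ball (-(r • e1 d)) 1 ∪ Metric.ball (r • e1 d) 1

/-- The empirical measure `μ_N = N⁻¹ ∑_{n<N} δ_{X n ω}`. -/
def empMeas {d : ℕ} {Ω : Type*} (X : ℕ → Ω → Euc d) (N : ℕ) (ω : Ω) : Measure (Euc d) :=
  (N : ℝ≥0∞)⁻¹ • ∑ n ∈ Finset.range N, Measure.dirac (X n ω)

/-- The (topological) support of a measure: points all of whose open neighborhoods have
positive measure. -/
def measSupp {d : ℕ} (μ : Measure (Euc d)) : Set (Euc d) :=
  {x | ∀ U : Set (Euc d), IsOpen U → x ∈ U → 0 < μ U}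

/-!
Write `c` for the centroid, `m = μ(ℝ^d)` and `v = c + φ`. Then
`J(v) - J(c) = ∫ ‖φ‖² - 2 ∫ ⟪φ x, x - c⟫ + λ ∬ ‖φ x - φ y‖`.

Upper bound: symmetrising in `x, y` gives
`2 m ∫ ⟪φ x, x - c⟫ = ∬ ⟪φ x - φ y, x - y⟫ ≤ diam (supp μ) ∬ ‖φ x - φ y‖`,
so the constant `c` minimises `J` as soon as `diam (supp μ) ≤ λ m`.

Lower bound: a constant minimiser may be replaced by `c`, which minimises `∫ ‖x - b‖²`.
If `a = μ {‖x - c‖ > s} > 0` for some `s > λ m`, moving `c` by `t` along `(x - c)/‖x - c‖`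
on that set changes `J` by at most `t a (t - 2 s + 2 λ m)`, which is negative for `t = s - λ m`.
-/

section InnerProductSpace

variable {E : Type*} [NormedAddCommGroup E] [InnerProductSpace ℝ E]

theorem MeasureTheory.MemLp.integrable_inner {α : Type*} [MeasurableSpace α] {ν : Measure α}
    {f g : α → E} (hf : MemLp f 2 ν) (hg : MemLp g 2 ν) : Integrable (fun x => ⟪f x, g x⟫) ν := by
  refine (L2.integrable_inner (𝕜 := ℝ) hf.toLp hg.toLp).congr ?_
  filter_upwards [hf.coeFn_toLp, hg.coeFn_toLp] with x hfx hgx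
  rw [hfx, hgx]

theorem integral_norm_sub_sq {α : Type*} [MeasurableSpace α] {ν : Measure α} {f g : α → E}
    (hf : MemLp f 2 ν) (hg : MemLp g 2 ν) :
    ∫ x, ‖f x - g x‖ ^ 2 ∂ν =
      ∫ x, ‖f x‖ ^ 2 ∂ν - 2 * ∫ x, ⟪f x, g x⟫ ∂ν + ∫ x, ‖g x‖ ^ 2 ∂ν := by
  have hf2 := (memLp_two_iff_integrable_sq_norm hf.1).mp hf
  have hg2 := (memLp_two_iff_integrable_sq_norm hg.1).mp hg
  have hfg : Integrable (fun x => 2 * ⟪f x, g x⟫) ν := (hf.integrable_inner hg).const_mul 2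
  simp_rw [norm_sub_sq_real]
  rw [integral_add (f := fun x => ‖f x‖ ^ 2 - 2 * ⟪f x, g x⟫) (hf2.sub hfg) hg2,
    integral_sub hf2 hfg, integral_const_mul]

variable [MeasurableSpace E] {μ : Measure E} [IsFiniteMeasure μ]

theorem integral_norm_sub_sq_le_of_integral_eq_smul [CompleteSpace E]
    (hX : MemLp (fun x => x) 2 μ) {c : E} (hc : ∫ x, x ∂μ = μ.real Set.univ • c) (b : E) :
    ∫ x, ‖x - c‖ ^ 2 ∂μ ≤ ∫ x, ‖x - b‖ ^ 2 ∂μ := by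
  have hXc : MemLp (fun x => x - c) 2 μ := hX.sub (memLp_const c)
  have hmean : ∫ x, (x - c) ∂μ = 0 := by
    rw [integral_sub (hX.integrable one_le_two) (integrable_const c), integral_const, hc, sub_self]
  have hexp := integral_norm_sub_sq hXc (memLp_const (b - c))
  simp_rw [real_inner_comm, integral_inner (hXc.integrable one_le_two), hmean, inner_zero_right,
    sub_sub_sub_cancel_right] at hexp
  rw [hexp]
  have : 0 ≤ ∫ _x, ‖b - c‖ ^ 2 ∂μ := integral_nonneg fun _ => sq_nonneg _
  linarith

end InnerProductSpace

section DoubleIntegrals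

theorem integrable_prod_norm_sub {α F : Type*} [MeasurableSpace α] [NormedAddCommGroup F]
    {μ : Measure α} [IsFiniteMeasure μ] {φ : α → F} (hφ : Integrable φ μ) :
    Integrable (fun z : α × α => ‖φ z.1 - φ z.2‖) (μ.prod μ) :=
  ((hφ.comp_fst μ).sub (hφ.comp_snd μ)).norm

theorem integral_prod_norm_sub_le {α F : Type*} [MeasurableSpace α] [NormedAddCommGroup F]
    {μ : Measure α} [IsFiniteMeasure μ] {φ : α → F} (hφ : Integrable φ μ) :
    ∫ z, ‖φ z.1 - φ z.2‖ ∂(μ.prod μ) ≤ 2 * μ.real Set.univ * ∫ x, ‖φ x‖ ∂μ := by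
  have h1 := hφ.norm.comp_fst μ
  have h2 := hφ.norm.comp_snd μ
  calc ∫ z, ‖φ z.1 - φ z.2‖ ∂(μ.prod μ) ≤ ∫ z, (‖φ z.1‖ + ‖φ z.2‖) ∂(μ.prod μ) :=
        integral_mono (integrable_prod_norm_sub hφ) (h1.add h2) fun z => norm_sub_le _ _
    _ = 2 * μ.real Set.univ * ∫ x, ‖φ x‖ ∂μ := by
        rw [integral_add h1 h2, integral_fun_fst (fun x => ‖φ x‖),
          integral_fun_snd (fun x => ‖φ x‖), smul_eq_mul]
        ring

variable {E : Type*} [NormedAddCommGroup E] [InnerProductSpace ℝ E] [MeasurableSpace E]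
  {μ : Measure E} [IsFiniteMeasure μ] {φ : E → E}

theorem integrable_prod_inner_sub (hX : MemLp (fun x => x) 2 μ) (hφ : MemLp φ 2 μ) :
    Integrable (fun z : E × E => ⟪φ z.1 - φ z.2, z.1 - z.2⟫) (μ.prod μ) :=
  ((hφ.comp_fst μ).sub (hφ.comp_snd μ)).integrable_inner ((hX.comp_fst μ).sub (hX.comp_snd μ))

theorem integral_prod_inner_sub [CompleteSpace E] (hX : MemLp (fun x => x) 2 μ)
    (hφ : MemLp φ 2 μ) {c : E} (hc : ∫ x, x ∂μ = μ.real Set.univ • c) :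
    ∫ z, ⟪φ z.1 - φ z.2, z.1 - z.2⟫ ∂(μ.prod μ) =
      2 * μ.real Set.univ * ∫ x, ⟪φ x, x - c⟫ ∂μ := by
  set Φ : E × E → ℝ := fun z => ⟪φ z.1, z.1 - z.2⟫
  have hΦ : Integrable Φ (μ.prod μ) :=
    (hφ.comp_fst μ).integrable_inner ((hX.comp_fst μ).sub (hX.comp_snd μ))
  have hsymm : ∀ z : E × E, ⟪φ z.1 - φ z.2, z.1 - z.2⟫ = Φ z + Φ z.swap := fun z => by
    simp only [Φ, Prod.fst_swap, Prod.snd_swap, inner_sub_left, inner_sub_right]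
    ring
  have hinner : ∀ x, ∫ y, ⟪φ x, x - y⟫ ∂μ = μ.real Set.univ * ⟪φ x, x - c⟫ := fun x => by
    rw [integral_inner (f := fun y => x - y) ((integrable_const x).sub (hX.integrable one_le_two)),
      integral_sub (integrable_const x) (hX.integrable one_le_two), integral_const, hc, ← smul_sub,
      real_inner_smul_right]
  have hΦswap : Integrable (fun z : E × E => Φ z.swap) (μ.prod μ) := hΦ.swap
  simp_rw [hsymm]
  rw [integral_add hΦ hΦswap, integral_prod_swap, integral_prod Φ hΦ]
  simp only [Φ, hinner, integral_const_mul]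
  ring

theorem integral_prod_inner_sub_le_diam {S : Set E} (hS : Bornology.IsBounded S)
    (hμS : ∀ᵐ x ∂μ, x ∈ S) (hX : MemLp (fun x => x) 2 μ) (hφ : MemLp φ 2 μ) :
    ∫ z, ⟪φ z.1 - φ z.2, z.1 - z.2⟫ ∂(μ.prod μ) ≤
      Metric.diam S * ∫ z, ‖φ z.1 - φ z.2‖ ∂(μ.prod μ) := by
  rw [← integral_const_mul]
  refine integral_mono_ae (integrable_prod_inner_sub hX hφ)
    ((integrable_prod_norm_sub (hφ.integrable one_le_two)).const_mul _) ?_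
  filter_upwards [Measure.quasiMeasurePreserving_fst.ae hμS,
    Measure.quasiMeasurePreserving_snd.ae hμS] with z h1 h2
  calc ⟪φ z.1 - φ z.2, z.1 - z.2⟫ ≤ ‖φ z.1 - φ z.2‖ * ‖z.1 - z.2‖ := real_inner_le_norm _ _
    _ ≤ ‖φ z.1 - φ z.2‖ * Metric.diam S := by
        gcongr
        exact dist_eq_norm z.1 z.2 ▸ Metric.dist_le_diam_of_mem hS h1 h2
    _ = Metric.diam S * ‖φ z.1 - φ z.2‖ := mul_comm _ _

end DoubleIntegrals

section SumOfNorms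

variable {d : ℕ} {μ : Measure (Euc d)} {lam : ℝ}

theorem measSupp_eq_support : measSupp μ = μ.support := by
  rw [Measure.support_eq_forall_isOpen]
  exact Set.ext fun _ => forall_congr' fun _ => imp.swap

theorem ae_mem_measSupp : ∀ᵐ x ∂μ, x ∈ measSupp μ := by
  rw [measSupp_eq_support]
  exact Measure.support_mem_ae

theorem memLp_id_of_ae_mem_bounded [IsFiniteMeasure μ] {K : Set (Euc d)}
    (hK : Bornology.IsBounded K) (hμK : ∀ᵐ x ∂μ, x ∈ K) (p : ℝ≥0∞) :
    MemLp (fun x => x) p μ := by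
  obtain ⟨C, hC⟩ := hK.exists_norm_le
  exact MemLp.of_bound aestronglyMeasurable_id C (hμK.mono hC)

theorem integral_id_eq_smul_muCentroid [IsFiniteMeasure μ] [NeZero μ] :
    ∫ x, x ∂μ = μ.real Set.univ • muCentroid μ Set.univ := by
  rw [muCentroid, if_pos (Measure.measure_univ_pos.mpr (NeZero.ne μ)), Measure.restrict_univ,
    smul_smul, ← measureReal_def, mul_inv_cancel₀ measureReal_univ_ne_zero, one_smul]

theorem sonj_const (c : Euc d) : SONJ μ lam (fun _ => c) = ∫ x, ‖x - c‖ ^ 2 ∂μ := by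
  simp [SONJ, norm_sub_rev]

theorem sonj_congr_ae {u v : Euc d → Euc d} (h : u =ᵐ[μ] v) : SONJ μ lam u = SONJ μ lam v := by
  have hinner : ∀ᵐ x ∂μ, ∫ y, ‖u x - u y‖ ∂μ = ∫ y, ‖v x - v y‖ ∂μ := by
    filter_upwards [h] with x hx
    exact integral_congr_ae (h.mono fun y hy => by simp only [hx, hy])
  rw [SONJ, SONJ, integral_congr_ae (h.mono fun x hx => by rw [hx]), integral_congr_ae hinner]

theorem sonj_const_add [IsFiniteMeasure μ] (hX : MemLp (fun x => x) 2 μ) {φ : Euc d → Euc d}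
    (hφ : MemLp φ 2 μ) (c : Euc d) :
    SONJ μ lam (fun x => c + φ x) = SONJ μ lam (fun _ => c) + (∫ x, ‖φ x‖ ^ 2 ∂μ -
      2 * ∫ x, ⟪φ x, x - c⟫ ∂μ + lam * ∫ z, ‖φ z.1 - φ z.2‖ ∂(μ.prod μ)) := by
  have hfirst : ∫ x, ‖c + φ x - x‖ ^ 2 ∂μ = ∫ x, ‖φ x - (x - c)‖ ^ 2 ∂μ := by
    congr 1 with x
    rw [sub_sub_eq_add_sub, add_comm]
  rw [sonj_const, SONJ, hfirst,
    integral_norm_sub_sq (g := fun x => x - c) hφ (hX.sub (memLp_const c)),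
    integral_prod _ (integrable_prod_norm_sub (hφ.integrable one_le_two))]
  simp only [add_sub_add_left_eq_sub]
  ring

theorem isSONMin_const_muCentroid [IsFiniteMeasure μ] [NeZero μ]
    (hS : Bornology.IsBounded (measSupp μ))
    (hlam : Metric.diam (measSupp μ) ≤ lam * μ.real Set.univ) :
    IsSONMin μ lam (fun _ => muCentroid μ Set.univ) := by
  set c := muCentroid μ Set.univ
  set m := μ.real Set.univ
  have hm : 0 < m := measureReal_univ_pos
  have hX := memLp_id_of_ae_mem_bounded hS ae_mem_measSupp 2
  refine ⟨memLp_const c, fun v hv => ?_⟩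
  set φ : Euc d → Euc d := fun x => v x - c
  have hφ : MemLp φ 2 μ := hv.sub (memLp_const c)
  set G := ∫ x, ⟪φ x, x - c⟫ ∂μ
  set P := ∫ z, ‖φ z.1 - φ z.2‖ ∂(μ.prod μ)
  have hP : 0 ≤ P := integral_nonneg fun _ => norm_nonneg _
  have hGP : m * (2 * G) ≤ m * (lam * P) := calc
    m * (2 * G) = ∫ z, ⟪φ z.1 - φ z.2, z.1 - z.2⟫ ∂(μ.prod μ) := by
      rw [integral_prod_inner_sub hX hφ integral_id_eq_smul_muCentroid]
      ring
    _ ≤ Metric.diam (measSupp μ) * P := integral_prod_inner_sub_le_diam hS ae_mem_measSupp hX hφ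
    _ ≤ m * (lam * P) := by
      rw [← mul_assoc, mul_comm m lam]
      exact mul_le_mul_of_nonneg_right hlam hP
  have hv_eq : v = fun x => c + φ x := funext fun x => (add_sub_cancel c (v x)).symm
  rw [hv_eq, sonj_const_add hX hφ c]
  have : 0 ≤ ∫ x, ‖φ x‖ ^ 2 ∂μ := integral_nonneg fun _ => sq_nonneg _
  linarith [le_of_mul_le_mul_left hGP hm]

theorem Cohesive.isSONMin_const_muCentroid [IsFiniteMeasure μ] [NeZero μ] (h : Cohesive μ lam)
    (hX : MemLp (fun x => x) 2 μ) : IsSONMin μ lam (fun _ => muCentroid μ Set.univ) := by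
  obtain ⟨u, ⟨-, hu⟩, b, hub⟩ := h
  refine ⟨memLp_const _, fun v hv => le_trans ?_ (hu v hv)⟩
  rw [sonj_congr_ae hub, sonj_const, sonj_const]
  exact integral_norm_sub_sq_le_of_integral_eq_smul hX integral_id_eq_smul_muCentroid b

theorem IsSONMin.two_mul_integral_inner_le [IsFiniteMeasure μ] {c : Euc d}
    (hmin : IsSONMin μ lam (fun _ => c)) (hX : MemLp (fun x => x) 2 μ) {φ : Euc d → Euc d}
    (hφ : MemLp φ 2 μ) {t : ℝ} (ht : 0 < t) :
    2 * ∫ x, ⟪φ x, x - c⟫ ∂μ ≤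
      t * ∫ x, ‖φ x‖ ^ 2 ∂μ + lam * ∫ z, ‖φ z.1 - φ z.2‖ ∂(μ.prod μ) := by
  have key := hmin.2 (fun x => c + t • φ x) ((memLp_const c).add (hφ.const_smul t))
  rw [sonj_const_add (φ := fun x => t • φ x) hX (hφ.const_smul t)] at key
  simp only [← smul_sub, norm_smul, real_inner_smul_left, mul_pow, integral_const_mul,
    Real.norm_eq_abs, abs_of_pos ht] at key
  have : 0 ≤ t * (t * ∫ x, ‖φ x‖ ^ 2 ∂μ - 2 * ∫ x, ⟪φ x, x - c⟫ ∂μ +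
      lam * ∫ z, ‖φ z.1 - φ z.2‖ ∂(μ.prod μ)) := by linarith
  linarith [(mul_nonneg_iff_of_pos_left ht).mp this]

theorem IsSONMin.ae_norm_sub_le [IsFiniteMeasure μ] {c : Euc d}
    (hmin : IsSONMin μ lam (fun _ => c)) (hX : MemLp (fun x => x) 2 μ) (hlam : 0 ≤ lam) {s : ℝ}
    (hs : lam * μ.real Set.univ < s) : ∀ᵐ x ∂μ, ‖x - c‖ ≤ s := by
  set m := μ.real Set.univ
  set A := {x | s < ‖x - c‖}
  have hA : MeasurableSet A := measurableSet_lt measurable_const (by fun_prop)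
  set a := μ.real A
  set φ : Euc d → Euc d := A.indicator fun x => ‖x - c‖⁻¹ • (x - c)
  have hs0 : 0 < s := lt_of_le_of_lt (mul_nonneg hlam measureReal_nonneg) hs
  have hφ_mem : ∀ x ∈ A, ‖φ x‖ = 1 ∧ ⟪φ x, x - c⟫ = ‖x - c‖ := fun x hx => by
    have hxc : ‖x - c‖ ≠ 0 := (hs0.trans hx).ne'
    simp only [φ, Set.indicator_of_mem hx, norm_smul, norm_inv, norm_norm, real_inner_smul_left,
      real_inner_self_eq_norm_sq]
    constructor <;> field_simp
  have hφ_bounds : ∀ x, ‖φ x‖ ≤ A.indicator 1 x ∧ ‖φ x‖ ^ 2 ≤ A.indicator 1 x ∧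
      s * A.indicator 1 x ≤ ⟪φ x, x - c⟫ := fun x => by
    by_cases hx : x ∈ A
    · simpa [hφ_mem x hx, hx] using hx.le
    · simp [φ, hx]
  have hind : Integrable (A.indicator 1) μ := (integrable_const (1 : ℝ)).indicator hA
  have hind_eq : ∫ x, A.indicator 1 x ∂μ = a := integral_indicator_one hA
  have hφ : MemLp φ 2 μ :=
    MemLp.of_bound ((by fun_prop : Measurable _).indicator hA).aestronglyMeasurable 1
      (Eventually.of_forall fun x => (hφ_bounds x).1.trans (Set.indicator_le_self' (by simp) x))
  have hB : ∫ x, ‖φ x‖ ^ 2 ∂μ ≤ a := by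
    rw [← hind_eq]
    exact integral_mono ((memLp_two_iff_integrable_sq_norm hφ.1).mp hφ) hind
      fun x => (hφ_bounds x).2.1
  have hG : s * a ≤ ∫ x, ⟪φ x, x - c⟫ ∂μ := by
    rw [← hind_eq, ← integral_const_mul]
    exact integral_mono (hind.const_mul s) (hφ.integrable_inner (hX.sub (memLp_const c)))
      fun x => (hφ_bounds x).2.2
  have hP : ∫ z, ‖φ z.1 - φ z.2‖ ∂(μ.prod μ) ≤ 2 * m * a := by
    refine (integral_prod_norm_sub_le (hφ.integrable one_le_two)).trans ?_
    rw [← hind_eq]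
    exact mul_le_mul_of_nonneg_left
      (integral_mono (hφ.integrable one_le_two).norm hind fun x => (hφ_bounds x).1) (by positivity)
  set t := s - lam * m
  have ht : 0 < t := sub_pos.mpr hs
  have ha : t * a ≤ 0 := by
    nlinarith [hmin.two_mul_integral_inner_le hX hφ ht, mul_le_mul_of_nonneg_left hB ht.le,
      mul_le_mul_of_nonneg_left hP hlam]
  have hA0 : μ A = 0 := by
    rw [← measureReal_eq_zero_iff]
    exact le_antisymm (nonpos_of_mul_nonpos_right ha ht) measureReal_nonneg
  exact measure_eq_zero_iff_ae_notMem.mp hA0 |>.mono fun x hx => not_lt.mp hx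

theorem Cohesive.essSup_norm_sub_muCentroid_le [IsFiniteMeasure μ] [NeZero μ]
    (h : Cohesive μ lam) (hlam : 0 ≤ lam) (hX : MemLp (fun x => x) 2 μ) :
    essSup (fun x => ‖x - muCentroid μ Set.univ‖) μ ≤ lam * μ.real Set.univ := by
  have hmin := h.isSONMin_const_muCentroid hX
  refine le_of_forall_gt_imp_ge_of_dense fun s hs => essSup_le_of_ae_le s
    (hmin.ae_norm_sub_le hX hlam hs) ?_
  exact isCoboundedUnder_le_of_eventually_le _ (Eventually.of_forall fun _ => norm_nonneg _)

end SumOfNorms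

/-- **Proposition (two-sided bound on `λ₁`).**
`R(μ)/μ(ℝ^d) ≤ λ₁(μ) ≤ diam(supp μ)/μ(ℝ^d)`, where
`R(μ) = esssup_{x∼μ} |x - C_μ(ℝ^d)|`. -/
theorem stmt10
    (d : ℕ) (μ : Measure (Euc d)) [IsFiniteMeasure μ] (hμ0 : μ ≠ 0)
    (hsupp : ∃ K : Set (Euc d), IsCompact K ∧ μ Kᶜ = 0) :
    essSup (fun x => ‖x - muCentroid μ Set.univ‖) μ / (μ Set.univ).toReal ≤ lambda1 μ ∧
      lambda1 μ ≤ Metric.diam (measSupp μ) / (μ Set.univ).toReal := by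
  have : NeZero μ := ⟨hμ0⟩
  obtain ⟨K, hK, hμK⟩ := hsupp
  have hS : Bornology.IsBounded (measSupp μ) := hK.isBounded.subset <| by
    rw [measSupp_eq_support]
    exact Measure.support_subset_of_isClosed hK.isClosed (mem_ae_iff.mpr hμK)
  have hX := memLp_id_of_ae_mem_bounded hS ae_mem_measSupp 2
  have hm : 0 < μ.real Set.univ := measureReal_univ_pos
  have hmem : Metric.diam (measSupp μ) / μ.real Set.univ ∈ {lam | 0 ≤ lam ∧ Cohesive μ lam} :=
    ⟨by positivity, _, isSONMin_const_muCentroid hS (div_mul_cancel₀ _ hm.ne').ge, _, .rfl⟩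
  refine ⟨le_csInf ⟨_, hmem⟩ fun lam ⟨hlam, hcoh⟩ => ?_, csInf_le ⟨0, fun _ h => h.1⟩ hmem⟩
  exact (div_le_iff₀ hm).mpr (hcoh.essSup_norm_sub_muCentroid_le hlam hX)
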